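/- arXiv:1906.08732 — 7 statements merged into one kernel-verified Lean document; each statement's English description precedes it below -/
import Mathlib

section
/- For the proportional allocation mechanism with parameter g(x) = x^l applied to two bid vectors b, b' in (R^{>0})^k, if every coordinate satisfies (1/f)·b'_i ≤ b_i ≤ f·b'_i where f = ((1+d)/(1-d))^{1/l} for some d ∈ [0,1), then the total variation distance between the induced probability distributions p_i = b_i^l / Σ_j b_j^l and p'_i = (b'_i)^l / Σ_j (b'_j)^l is at most d; that is, (1/2)·Σ_i |p_i − p'_i| ≤ d. -/
lemma key_tv (d x y z w : ℝ) (hd0 : 0 ≤ d) (hd1 : d < 1)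
    (hx : 0 ≤ x) (hy : 0 ≤ y) (hz : 0 ≤ z) (hw : 0 ≤ w)
    (hX : 0 < x + z) (hY : 0 < y + w)
    (h1 : (1 - d) * x ≤ (1 + d) * y) (h2 : (1 - d) * w ≤ (1 + d) * z) :
    x / (x + z) - y / (y + w) ≤ d := by
  rw [div_sub_div _ _ (ne_of_gt hX) (ne_of_gt hY), div_le_iff₀ (by positivity)]
  set s := Real.sqrt (x * w) with hs
  set t := Real.sqrt (y * z) with ht
  have hs2 : s ^ 2 = x * w := Real.sq_sqrt (by positivity)
  have ht2 : t ^ 2 = y * z := Real.sq_sqrt (by positivity)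
  have hsn : 0 ≤ s := Real.sqrt_nonneg _
  have htn : 0 ≤ t := Real.sqrt_nonneg _
  have hst : (1 - d) * s ≤ (1 + d) * t := by
    have hq : (1 - d) ^ 2 * (x * w) ≤ (1 + d) ^ 2 * (y * z) := by
      have h := mul_le_mul h1 h2 (mul_nonneg (by linarith) hw) (mul_nonneg (by linarith) hy)
      nlinarith [h]
    have e1 : (1 - d) * s = Real.sqrt ((1 - d) ^ 2 * (x * w)) := by
      rw [Real.sqrt_mul (by positivity), Real.sqrt_sq (by linarith)]
    have e2 : (1 + d) * t = Real.sqrt ((1 + d) ^ 2 * (y * z)) := by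
      rw [Real.sqrt_mul (by positivity), Real.sqrt_sq (by linarith)]
    rw [e1, e2]
    exact Real.sqrt_le_sqrt hq
  have hamgm : 2 * s * t ≤ x * y + z * w := by
    have h := sq_nonneg (Real.sqrt (x*y) - Real.sqrt (z*w))
    have h1' : Real.sqrt (x*y) ^ 2 = x*y := Real.sq_sqrt (by positivity)
    have h2' : Real.sqrt (z*w) ^ 2 = z*w := Real.sq_sqrt (by positivity)
    have h3 : Real.sqrt (x*y) * Real.sqrt (z*w) = s * t := by
      rw [hs, ht, ← Real.sqrt_mul (by positivity), ← Real.sqrt_mul (by positivity)]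
      ring_nf
    nlinarith
  nlinarith [mul_nonneg hsn htn, mul_le_mul_of_nonneg_right hst (by linarith : (0:ℝ) ≤ s + t)]

/-- Total variation fairness of the proportional allocation mechanism with
parameter `g(x) = x^l` under the bid ratio condition `f_l(d) = ((1+d)/(1-d))^(1/l)`. -/
theorem stmt_0 (k l : ℕ) (hk : 1 ≤ k) (hl : 1 ≤ l) (d : ℝ) (hd0 : 0 ≤ d) (hd1 : d < 1)
    (b b' : Fin k → ℝ) (hb : ∀ i, 0 < b i) (hb' : ∀ i, 0 < b' i)
    (hratio : ∀ i, (1 / ((1 + d) / (1 - d)) ^ ((1 : ℝ) / l)) * b' i ≤ b i ∧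
      b i ≤ ((1 + d) / (1 - d)) ^ ((1 : ℝ) / l) * b' i) :
    (1 / 2) * ∑ i, |b i ^ l / (∑ j, b j ^ l) - b' i ^ l / (∑ j, b' j ^ l)| ≤ d := by
  have hd1' : (0:ℝ) < 1 - d := by linarith
  set c : ℝ := (1 + d) / (1 - d) with hc
  have hcpos : 0 < c := by positivity
  set f : ℝ := c ^ ((1 : ℝ) / l) with hf
  have hfpos : 0 < f := Real.rpow_pos_of_pos hcpos _
  have hl0 : (l : ℝ) ≠ 0 := Nat.cast_ne_zero.mpr (by omega)
  have hfl : f ^ l = c := by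
    rw [hf, ← Real.rpow_natCast (c ^ ((1:ℝ)/l)) l, ← Real.rpow_mul hcpos.le,
      one_div, inv_mul_cancel₀ hl0, Real.rpow_one]
  have hcm : (1 - d) * c = 1 + d := by
    rw [hc]; field_simp
  -- per-coordinate bounds on l-th powers
  have hcoord : ∀ i, (1 - d) * b i ^ l ≤ (1 + d) * b' i ^ l ∧
      (1 - d) * b' i ^ l ≤ (1 + d) * b i ^ l := by
    intro i
    obtain ⟨hlo, hhi⟩ := hratio i
    constructor
    · have h : b i ^ l ≤ c * b' i ^ l := by
        calc b i ^ l ≤ (f * b' i) ^ l := pow_le_pow_left₀ (hb i).le hhi l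
        _ = f ^ l * b' i ^ l := mul_pow _ _ _
        _ = c * b' i ^ l := by rw [hfl]
      calc (1 - d) * b i ^ l ≤ (1 - d) * (c * b' i ^ l) :=
            mul_le_mul_of_nonneg_left h hd1'.le
        _ = (1 + d) * b' i ^ l := by rw [← mul_assoc, hcm]
    · have h' : b' i ≤ f * b i := by
        calc b' i = f * (1 / f * b' i) := by field_simp
        _ ≤ f * b i := mul_le_mul_of_nonneg_left hlo hfpos.le
      have h : b' i ^ l ≤ c * b i ^ l := by
        calc b' i ^ l ≤ (f * b i) ^ l := pow_le_pow_left₀ (hb' i).le h' l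
        _ = f ^ l * b i ^ l := mul_pow _ _ _
        _ = c * b i ^ l := by rw [hfl]
      calc (1 - d) * b' i ^ l ≤ (1 - d) * (c * b i ^ l) :=
            mul_le_mul_of_nonneg_left h hd1'.le
        _ = (1 + d) * b i ^ l := by rw [← mul_assoc, hcm]
  have hne : Nonempty (Fin k) := ⟨⟨0, by omega⟩⟩
  have hS : 0 < ∑ j, b j ^ l :=
    Finset.sum_pos (fun i _ => pow_pos (hb i) l) Finset.univ_nonempty
  have hS' : 0 < ∑ j, b' j ^ l :=
    Finset.sum_pos (fun i _ => pow_pos (hb' i) l) Finset.univ_nonempty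
  set S : ℝ := ∑ j, b j ^ l with hSdef
  set S' : ℝ := ∑ j, b' j ^ l with hS'def
  set p : Fin k → ℝ := fun i => b i ^ l / S with hp
  set p' : Fin k → ℝ := fun i => b' i ^ l / S' with hp'
  have hsump : ∑ i, p i = 1 := by
    rw [hp]; rw [← Finset.sum_div]; exact div_self (ne_of_gt hS)
  have hsump' : ∑ i, p' i = 1 := by
    rw [hp']; rw [← Finset.sum_div]; exact div_self (ne_of_gt hS')
  -- reduce |·| sum to positive part
  have habs : ∀ i, |p i - p' i| = 2 * max (p i - p' i) 0 - (p i - p' i) := by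
    intro i
    rcases le_or_gt 0 (p i - p' i) with h | h
    · rw [abs_of_nonneg h, max_eq_left h]; ring
    · rw [abs_of_neg h, max_eq_right h.le]; ring
  have hsplit : ∑ i, |p i - p' i| = 2 * ∑ i, max (p i - p' i) 0 := by
    calc ∑ i, |p i - p' i| = ∑ i, (2 * max (p i - p' i) 0 - (p i - p' i)) :=
          Finset.sum_congr rfl (fun i _ => habs i)
      _ = 2 * ∑ i, max (p i - p' i) 0 - (∑ i, p i - ∑ i, p' i) := by
          rw [Finset.sum_sub_distrib, Finset.mul_sum, Finset.sum_sub_distrib]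
      _ = 2 * ∑ i, max (p i - p' i) 0 := by rw [hsump, hsump']; ring
  set A : Finset (Fin k) := Finset.univ.filter (fun i => p' i ≤ p i) with hA
  have hmax : ∑ i, max (p i - p' i) 0 = ∑ i ∈ A, (p i - p' i) := by
    rw [hA, Finset.sum_filter]
    refine Finset.sum_congr rfl (fun i _ => ?_)
    split_ifs with h
    · rw [max_eq_left (by linarith)]
    · rw [max_eq_right (by push_neg at h; linarith)]
  set Ac : Finset (Fin k) := Finset.univ.filter (fun i => ¬ (p' i ≤ p i)) with hAc
  set x : ℝ := ∑ i ∈ A, b i ^ l with hx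
  set y : ℝ := ∑ i ∈ A, b' i ^ l with hy
  set z : ℝ := ∑ i ∈ Ac, b i ^ l with hz
  set w : ℝ := ∑ i ∈ Ac, b' i ^ l with hw
  have hxz : x + z = S := by
    rw [hx, hz, hA, hAc, hSdef]
    exact Finset.sum_filter_add_sum_filter_not _ _ _
  have hyw : y + w = S' := by
    rw [hy, hw, hA, hAc, hS'def]
    exact Finset.sum_filter_add_sum_filter_not _ _ _
  have hxn : 0 ≤ x := Finset.sum_nonneg (fun i _ => pow_nonneg (hb i).le l)
  have hyn : 0 ≤ y := Finset.sum_nonneg (fun i _ => pow_nonneg (hb' i).le l)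
  have hzn : 0 ≤ z := Finset.sum_nonneg (fun i _ => pow_nonneg (hb i).le l)
  have hwn : 0 ≤ w := Finset.sum_nonneg (fun i _ => pow_nonneg (hb' i).le l)
  have h1 : (1 - d) * x ≤ (1 + d) * y := by
    rw [hx, hy, Finset.mul_sum, Finset.mul_sum]
    exact Finset.sum_le_sum (fun i _ => (hcoord i).1)
  have h2 : (1 - d) * w ≤ (1 + d) * z := by
    rw [hw, hz, Finset.mul_sum, Finset.mul_sum]
    exact Finset.sum_le_sum (fun i _ => (hcoord i).2)
  have hsumA : ∑ i ∈ A, (p i - p' i) = x / (x + z) - y / (y + w) := by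
    rw [hxz, hyw, Finset.sum_sub_distrib, hp, hp', hx, hy, Finset.sum_div, Finset.sum_div]
  have hkey := key_tv d x y z w hd0 hd1 hxn hyn hzn hwn
    (by rw [hxz]; exact hS) (by rw [hyw]; exact hS') h1 h2
  calc (1/2 : ℝ) * ∑ i, |p i - p' i| = ∑ i ∈ A, (p i - p' i) := by
        rw [hsplit, hmax]; ring
    _ = x / (x + z) - y / (y + w) := hsumA
    _ ≤ d := hkey
end

section
/- Let b ∈ (R^{>0})^k be a bid vector with maximum value B = max_i b_i, and let p_i = b_i^l / Σ_j b_j^l be the proportional allocation with parameter x^l. Then Σ_i p_i b_i ≥ B · (Σ_i (b_i/B)^{l+1}) / (Σ_i (b_i/B)^l), and when k ≥ 9 and l ≥ 1 this ratio is bounded below by (k-1)^{-1/l}·(k-1)/k + 1/k, so that Σ_i p_i·b_i ≥ B·((k-1)^{-1/l}·(k-1)/k + 1/k). -/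
open Finset

/-- Pointwise bound: `t^l (c - t) ≤ c^(l+1)/(l+1)` for `t ≥ 0`, `c ≥ 0`. -/
lemma aux_pointwise (l : ℕ) (c t : ℝ) (ht0 : 0 ≤ t) (hc : 0 ≤ c) :
    t ^ l * (c - t) ≤ c ^ (l + 1) / ((l : ℝ) + 1) := by
  rcases le_or_gt c t with h | h
  · have h1 : t ^ l * (c - t) ≤ 0 :=
      mul_nonpos_of_nonneg_of_nonpos (pow_nonneg ht0 l) (by linarith)
    have h2 : (0:ℝ) ≤ c ^ (l+1) / ((l:ℝ)+1) := by positivity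
    linarith
  · rw [le_div_iff₀ (by positivity : (0:ℝ) < (l:ℝ) + 1)]
    have hgeom := geom_sum₂_mul c t (l + 1)
    have hsum : ((l:ℝ) + 1) * t ^ l ≤ ∑ i ∈ range (l + 1), c ^ i * t ^ (l + 1 - 1 - i) := by
      have hterm : ∀ i ∈ range (l + 1), t ^ l ≤ c ^ i * t ^ (l + 1 - 1 - i) := by
        intro i hi
        have hil : i ≤ l := by simpa using Nat.lt_succ_iff.mp (mem_range.mp hi)
        have h1 : t ^ l = t ^ i * t ^ (l - i) := by rw [← pow_add]; congr 1; omega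
        rw [h1, show (l + 1 - 1 - i) = l - i by omega]
        exact mul_le_mul_of_nonneg_right (pow_le_pow_left₀ ht0 h.le i) (pow_nonneg ht0 _)
      calc ((l:ℝ) + 1) * t ^ l = ∑ _i ∈ range (l + 1), t ^ l := by
            rw [Finset.sum_const, card_range]; push_cast; ring
        _ ≤ _ := Finset.sum_le_sum hterm
    have hct : (0:ℝ) ≤ c - t := by linarith
    calc t ^ l * (c - t) * ((l:ℝ) + 1) = (((l:ℝ) + 1) * t ^ l) * (c - t) := by ring
      _ ≤ (∑ i ∈ range (l + 1), c ^ i * t ^ (l + 1 - 1 - i)) * (c - t) :=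
          mul_le_mul_of_nonneg_right hsum hct
      _ = c ^ (l + 1) - t ^ (l + 1) := hgeom
      _ ≤ c ^ (l + 1) := by
          have : (0:ℝ) ≤ t ^ (l + 1) := pow_nonneg ht0 _
          linarith

/-- Key root bound: if `x^l ≥ 8`, `x > 0`, `l ≥ 1`, then `x ≥ 1 + 2/(l + 7/10)`. -/
lemma aux_root (l : ℕ) (hl : 1 ≤ l) (x : ℝ) (hx0 : 0 < x) (hxl : 8 ≤ x ^ l) :
    1 + 2 / ((l:ℝ) + 7/10) ≤ x := by
  have hl1 : (1:ℝ) ≤ (l:ℝ) := by exact_mod_cast hl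
  have hd : (0:ℝ) < (l:ℝ) + 7/10 := by linarith
  have h1 : (1 + 2 / ((l:ℝ) + 7/10)) ^ l < x ^ l := by
    have ht : (0:ℝ) ≤ 2 / ((l:ℝ) + 7/10) := by positivity
    have hexp : (1 + 2 / ((l:ℝ) + 7/10)) ^ l ≤ Real.exp (2 / ((l:ℝ) + 7/10)) ^ l :=
      pow_le_pow_left₀ (by linarith) (by linarith [Real.add_one_le_exp (2 / ((l:ℝ) + 7/10))]) l
    have hcalc : Real.exp (2 / ((l:ℝ) + 7/10)) ^ l = Real.exp ((l:ℝ) * (2 / ((l:ℝ) + 7/10))) :=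
      (Real.exp_nat_mul _ l).symm
    have harg : (l:ℝ) * (2 / ((l:ℝ) + 7/10)) < 2 := by
      rw [mul_div_assoc', div_lt_iff₀ hd]; nlinarith
    have h8 : Real.exp ((l:ℝ) * (2 / ((l:ℝ) + 7/10))) < 8 := by
      have hmono := Real.exp_lt_exp.mpr harg
      have he2 : Real.exp 2 < 8 := by
        have h1 := Real.exp_one_lt_d9
        have h2 : Real.exp 2 = Real.exp 1 * Real.exp 1 := by
          rw [← Real.exp_add]; norm_num
        nlinarith [Real.exp_pos 1]
      linarith
    calc (1 + 2 / ((l:ℝ) + 7/10)) ^ l ≤ Real.exp (2 / ((l:ℝ) + 7/10)) ^ l := hexp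
      _ = Real.exp ((l:ℝ) * (2 / ((l:ℝ) + 7/10))) := hcalc
      _ < 8 := h8
      _ ≤ x ^ l := hxl
  exact (lt_of_pow_lt_pow_left₀ l hx0.le h1).le

/-- Crux: `n * (c^(l+1)/(l+1)) ≤ 1 - c` for `c = (n a + 1)/(n+1)`, `a = n^{-1/l}`. -/
lemma aux_crux (l : ℕ) (hl : 1 ≤ l) (n : ℝ) (hn : 8 ≤ n) :
    n * (((n * (n ^ (-(1:ℝ)/(l:ℝ))) + 1)/(n+1)) ^ (l+1) / ((l:ℝ)+1))
      ≤ 1 - (n * (n ^ (-(1:ℝ)/(l:ℝ))) + 1)/(n+1) := by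
  have hl1 : (1:ℝ) ≤ (l:ℝ) := by exact_mod_cast hl
  have hn0 : (0:ℝ) < n := by linarith
  have hn1 : (0:ℝ) < n + 1 := by linarith
  set a : ℝ := n ^ (-(1:ℝ)/(l:ℝ)) with ha_def
  have ha0 : 0 < a := Real.rpow_pos_of_pos hn0 _
  have ha1 : a < 1 := Real.rpow_lt_one_of_one_lt_of_neg (by linarith)
    (div_neg_of_neg_of_pos (by norm_num) (by linarith))
  have hal : a ^ l = 1 / n := by
    rw [ha_def, ← Real.rpow_natCast (n ^ (-(1:ℝ)/(l:ℝ))) l, ← Real.rpow_mul hn0.le]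
    rw [show (-(1:ℝ)/(l:ℝ)) * (l:ℝ) = -1 by field_simp]
    rw [Real.rpow_neg_one, one_div]
  set c : ℝ := (n * a + 1)/(n+1) with hc_def
  have hc0 : 0 < c := by positivity
  have hc1 : c ≤ 1 := by
    rw [hc_def, div_le_one hn1]; nlinarith
  -- Jensen: c^l ≤ 2/(n+1)
  have hcl : c ^ l ≤ 2 / (n + 1) := by
    have hconv := (convexOn_pow (𝕜 := ℝ) l).2 (Set.mem_Ici.mpr ha0.le)
      (Set.mem_Ici.mpr (zero_le_one (α := ℝ)))
      (show (0:ℝ) ≤ n/(n+1) by positivity) (show (0:ℝ) ≤ 1/(n+1) by positivity)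
      (by field_simp)
    simp only [smul_eq_mul] at hconv
    have he : n/(n+1) * a + 1/(n+1) * 1 = c := by rw [hc_def]; ring
    rw [he] at hconv
    calc c ^ l ≤ n/(n+1) * a ^ l + 1/(n+1) * 1 ^ l := hconv
      _ = 2 / (n+1) := by rw [hal]; field_simp; ring
  -- 2c ≤ (l+1)(1-a)
  have h2c : 2 * c ≤ ((l:ℝ) + 1) * (1 - a) := by
    set x : ℝ := a⁻¹ with hx_def
    have hx0 : 0 < x := by positivity
    have hax : a * x = 1 := by rw [hx_def]; field_simp
    have hxl : x ^ l = n := by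
      rw [hx_def, inv_pow, hal, one_div, inv_inv]
    have hroot : 1 + 2 / ((l:ℝ) + 7/10) ≤ x := aux_root l hl x hx0 (by rw [hxl]; exact hn)
    have hld : (0:ℝ) < (l:ℝ) + 7/10 := by linarith
    have hepos : (0:ℝ) < 2 / ((l:ℝ) + 7/10) := by positivity
    have hd : 2 / ((l:ℝ) + 7/10) ≤ x - 1 := by linarith
    -- polynomial core: 2(n+x) ≤ (l+1)(x-1)(n+1)
    have hpoly : 2 * (n + x) ≤ ((l:ℝ) + 1) * (x - 1) * (n + 1) := by
      have hkey : (((l:ℝ) + 1) * (n + 1) - 2) * (2 / ((l:ℝ) + 7/10)) ≥ 2 * (n + 1) := by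
        rw [ge_iff_le, ← sub_nonneg]
        have heq : (((l:ℝ) + 1) * (n + 1) - 2) * (2 / ((l:ℝ) + 7/10)) - 2 * (n + 1)
            = 2 * ((3/10) * (n+1) - 2) / ((l:ℝ) + 7/10) := by field_simp; ring
        rw [heq]
        have : (0:ℝ) ≤ (3/10) * (n+1) - 2 := by linarith
        positivity
      have hx1 : (0:ℝ) ≤ x - 1 := by linarith
      have hc2 : (0:ℝ) ≤ ((l:ℝ) + 1) * (n + 1) - 2 := by nlinarith
      have := mul_le_mul_of_nonneg_left hd hc2
      nlinarith
    -- multiply hpoly by a > 0 and use a*x = 1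
    have h6 : 2 * (n * a + 1) ≤ ((l:ℝ) + 1) * (1 - a) * (n + 1) := by
      have hm := mul_le_mul_of_nonneg_left hpoly ha0.le
      have e1 : a * (2 * (n + x)) = 2 * (n * a + 1) := by linear_combination 2 * hax
      have e2 : a * (((l:ℝ) + 1) * (x - 1) * (n + 1)) = ((l:ℝ) + 1) * (1 - a) * (n + 1) := by
        linear_combination ((l:ℝ) + 1) * (n + 1) * hax
      rw [e1, e2] at hm
      exact hm
    rw [hc_def]
    calc 2 * ((n * a + 1) / (n + 1)) = 2 * (n * a + 1) / (n+1) := by ring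
      _ ≤ ((l:ℝ) + 1) * (1 - a) := by rw [div_le_iff₀ hn1]; linarith
  -- assemble
  have hll : (0:ℝ) < (l:ℝ) + 1 := by linarith
  have hpow : c ^ (l + 1) ≤ 2 / (n+1) * c := by
    rw [pow_succ]
    exact mul_le_mul_of_nonneg_right hcl hc0.le
  have h1c : 1 - c = n * (1 - a) / (n + 1) := by rw [hc_def]; field_simp; ring
  rw [h1c]
  calc n * (c ^ (l+1) / ((l:ℝ)+1)) ≤ n * ((2/(n+1) * c) / ((l:ℝ)+1)) := by
        gcongr
    _ = n / (n+1) * (2 * c / ((l:ℝ)+1)) := by ring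
    _ ≤ n / (n+1) * (1 - a) := by
        apply mul_le_mul_of_nonneg_left _ (by positivity)
        rw [div_le_iff₀ hll]; nlinarith
    _ = n * (1 - a) / (n+1) := by ring

/-- Fair value lower bound for the proportional allocation mechanism with parameter
`x^l` on a single user: the expected value is at least
`B * ((k-1)^(-1/l) * (k-1)/k + 1/k)` where `B` is the maximum bid. -/
theorem stmt_2 (k l : ℕ) (hk : 9 ≤ k) (hl : 1 ≤ l) (b : Fin k → ℝ) (hb : ∀ i, 0 < b i)
    (B : ℝ) (hBmax : ∀ i, b i ≤ B) (hBmem : ∃ i, b i = B) :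
    B * (((k : ℝ) - 1) ^ (-(1 : ℝ) / l) * ((k : ℝ) - 1) / k + 1 / k) ≤
      ∑ i, (b i ^ l / ∑ j, b j ^ l) * b i := by
  obtain ⟨m, hm⟩ := hBmem
  have hB0 : 0 < B := hm ▸ hb m
  have hk9 : (9:ℝ) ≤ (k:ℝ) := by exact_mod_cast hk
  have hk0 : (0:ℝ) < (k:ℝ) := by linarith
  set n : ℝ := (k:ℝ) - 1 with hn_def
  have hn8 : 8 ≤ n := by rw [hn_def]; linarith
  have hn1k : n + 1 = (k:ℝ) := by rw [hn_def]; ring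
  set a : ℝ := n ^ (-(1:ℝ)/(l:ℝ)) with ha_def
  have ha0 : 0 < a := Real.rpow_pos_of_pos (by linarith) _
  have hl1 : (1:ℝ) ≤ (l:ℝ) := by exact_mod_cast hl
  have ha1 : a < 1 := Real.rpow_lt_one_of_one_lt_of_neg (by linarith)
    (div_neg_of_neg_of_pos (by norm_num) (by linarith))
  set c : ℝ := (n * a + 1) / (n + 1) with hc_def
  have hc0 : 0 < c := by positivity
  have hc1 : c ≤ 1 := by
    rw [hc_def, div_le_one (by linarith)]; nlinarith
  have hgoal_c : a * n / (k:ℝ) + 1 / (k:ℝ) = c := by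
    rw [hc_def, hn1k]; ring
  have hcrux : n * (c ^ (l+1) / ((l:ℝ)+1)) ≤ 1 - c := aux_crux l hl n hn8
  -- normalized bids
  set t : Fin k → ℝ := fun i => b i / B with ht_def
  have ht0 : ∀ i, 0 < t i := fun i => div_pos (hb i) hB0
  have htm : t m = 1 := by
    simp only [ht_def]; rw [hm]; field_simp
  -- key sum inequality for normalized bids
  have hmain : c * ∑ i, t i ^ l ≤ ∑ i, t i ^ l * t i := by
    have hsum : ∑ i, t i ^ l * (c - t i) ≤ 0 := by
      have hsplit := Finset.add_sum_erase Finset.univ (fun i => t i ^ l * (c - t i))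
        (Finset.mem_univ m)
      have hrest : ∑ i ∈ Finset.univ.erase m, t i ^ l * (c - t i)
          ≤ ((k:ℝ) - 1) * (c ^ (l+1) / ((l:ℝ)+1)) := by
        have hcard : (Finset.univ.erase m).card = k - 1 := by
          rw [Finset.card_erase_of_mem (Finset.mem_univ m)]
          simp
        have hle := Finset.sum_le_card_nsmul (Finset.univ.erase m)
          (fun i => t i ^ l * (c - t i)) (c ^ (l+1) / ((l:ℝ)+1))
          (fun i _ => aux_pointwise l c (t i) (ht0 i).le hc0.le)
        rw [hcard, nsmul_eq_mul] at hle
        have hcast : ((k - 1 : ℕ) : ℝ) = (k:ℝ) - 1 := by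
          have h1k : 1 ≤ k := by omega
          push_cast [h1k]
          ring
        rw [hcast] at hle
        exact hle
      have hmterm : t m ^ l * (c - t m) = c - 1 := by rw [htm]; simp
      have htot : ∑ i, t i ^ l * (c - t i)
          ≤ (c - 1) + ((k:ℝ)-1) * (c ^ (l+1)/((l:ℝ)+1)) := by
        rw [← hsplit]
        exact add_le_add (le_of_eq hmterm) hrest
      have hnk : (k:ℝ) - 1 = n := by rw [hn_def]
      rw [hnk] at htot
      linarith
    have hexp : ∑ i, t i ^ l * (c - t i) = c * ∑ i, t i ^ l - ∑ i, t i ^ l * t i := by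
      rw [Finset.mul_sum, ← Finset.sum_sub_distrib]
      congr 1; funext i; ring
    rw [hexp] at hsum
    linarith
  -- unnormalize
  have hS : (0:ℝ) < ∑ j, b j ^ l :=
    Finset.sum_pos (fun i _ => pow_pos (hb i) l) ⟨m, Finset.mem_univ m⟩
  have hRHS : ∑ i, (b i ^ l / ∑ j, b j ^ l) * b i
      = (∑ i, b i ^ l * b i) / ∑ j, b j ^ l := by
    rw [Finset.sum_div]
    apply Finset.sum_congr rfl
    intro i _
    rw [div_mul_eq_mul_div]
  rw [hgoal_c, hRHS, le_div_iff₀ hS]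
  have hbt : ∀ i, b i = B * t i := by
    intro i
    simp only [ht_def]
    field_simp
  have h1 : ∑ i, b i ^ l * b i = B ^ (l+1) * ∑ i, t i ^ l * t i := by
    rw [Finset.mul_sum]
    apply Finset.sum_congr rfl
    intro i _
    rw [hbt i, mul_pow, pow_succ]
    ring
  have h2 : (∑ j, b j ^ l) = B ^ l * ∑ j, t j ^ l := by
    rw [Finset.mul_sum]
    apply Finset.sum_congr rfl
    intro i _
    rw [hbt i, mul_pow]
  calc B * c * ∑ j, b j ^ l = B ^ (l+1) * (c * ∑ j, t j ^ l) := by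
        rw [h2, pow_succ]; ring
    _ ≤ B ^ (l+1) * ∑ i, t i ^ l * t i :=
        mul_le_mul_of_nonneg_left hmain (by positivity)
    _ = ∑ i, b i ^ l * b i := h1.symm
end

section
/- For all k ≥ 9 and integers l ≥ 1, the minimum over t ∈ [0,1] of F(t) = (1+(k-1)t^{l+1})/(1+(k-1)t^l) is at least 1/k + ((k-1)/k)·(k-1)^{-1/l}. -/
set_option maxHeartbeats 1000000


private lemma root_le_of_le_pow {l : ℕ} (hl : l ≠ 0) {x y : ℝ} (hx : 0 ≤ x) (hy : 0 ≤ y)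
    (h : x ≤ y ^ l) : x ^ ((1:ℝ)/l) ≤ y := by
  have hl' : (l:ℝ) ≠ 0 := Nat.cast_ne_zero.mpr hl
  calc x ^ ((1:ℝ)/l) ≤ (y ^ l) ^ ((1:ℝ)/l) :=
        Real.rpow_le_rpow hx h (by positivity)
    _ = y := by
        rw [← Real.rpow_natCast y l, ← Real.rpow_mul hy, mul_one_div,
          div_self hl', Real.rpow_one]

/-- The key single-variable inequality behind the fair-value bound:
`(1+(k-1)t^(l+1))/(1+(k-1)t^l) ≥ 1/k + ((k-1)/k)·(k-1)^(-1/l)` for `t ∈ [0,1]`,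
`k ≥ 9` and integer `l ≥ 1`. -/
theorem stmt_3 (k l : ℕ) (hk : 9 ≤ k) (hl : 1 ≤ l) (t : ℝ) (ht0 : 0 ≤ t) (ht1 : t ≤ 1) :
    1 / (k : ℝ) + (((k : ℝ) - 1) / k) * ((k : ℝ) - 1) ^ (-(1 : ℝ) / l) ≤
      (1 + ((k : ℝ) - 1) * t ^ (l + 1)) / (1 + ((k : ℝ) - 1) * t ^ l) := by
  have hlne : l ≠ 0 := by omega
  have hl' : (0:ℝ) < l := by exact_mod_cast Nat.pos_of_ne_zero hlne
  set K : ℝ := (k:ℝ) - 1 with hKdef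
  have hK8 : (8:ℝ) ≤ K := by
    have : (9:ℝ) ≤ (k:ℝ) := by exact_mod_cast hk
    simp only [hKdef]; linarith
  have hK0 : (0:ℝ) < K := by linarith
  set c : ℝ := K ^ (-(1:ℝ)/l) with hcdef
  have hc0 : 0 < c := Real.rpow_pos_of_pos hK0 _
  have hcinv : c = (K ^ ((1:ℝ)/l))⁻¹ := by
    rw [hcdef, neg_div, Real.rpow_neg hK0.le]
  have hd0 : 0 < K ^ ((1:ℝ)/l) := Real.rpow_pos_of_pos hK0 _
  have hcl : c ^ l = K⁻¹ := by
    rw [hcdef, ← Real.rpow_natCast (K ^ (-(1:ℝ)/l)) l, ← Real.rpow_mul hK0.le]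
    have : (-(1:ℝ)/l) * l = -1 := by field_simp
    rw [this, Real.rpow_neg_one]
  -- Bound 1: c * (l + 2) ≤ l
  have hb1 : c * ((l:ℝ) + 2) ≤ l := by
    have hroot : ((l:ℝ) + 2) / l ≤ K ^ ((1:ℝ)/l) := by
      have hbase : (0:ℝ) ≤ ((l:ℝ) + 2) / l := by positivity
      have hexp : (((l:ℝ) + 2) / l) ^ l ≤ K := by
        have h1 : ((l:ℝ) + 2) / l = 1 + 2 / l := by field_simp
        have h2 : (1 + 2 / (l:ℝ)) ≤ Real.exp (2 / l) := by
          have := Real.add_one_le_exp (2 / (l:ℝ)); linarith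
        have h3 : (1 + 2 / (l:ℝ)) ^ l ≤ Real.exp (2 / l) ^ l :=
          pow_le_pow_left₀ (by positivity) h2 l
        have h4 : Real.exp (2 / (l:ℝ)) ^ l = Real.exp 2 := by
          rw [← Real.exp_nat_mul]
          congr 1; field_simp
        have h5 : Real.exp 2 ≤ 8 := by
          have he := Real.exp_one_lt_d9
          have h6 : Real.exp 2 = Real.exp 1 * Real.exp 1 := by
            rw [← Real.exp_add]; norm_num
          nlinarith [Real.exp_pos 1]
        rw [h1]; calc (1 + 2 / (l:ℝ)) ^ l ≤ Real.exp 2 := by rw [← h4]; exact h3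
          _ ≤ 8 := h5
          _ ≤ K := hK8
      calc ((l:ℝ) + 2) / l = (((((l:ℝ) + 2) / l) ^ l) : ℝ) ^ ((1:ℝ)/l) := by
            rw [← Real.rpow_natCast (((l:ℝ) + 2) / l) l, ← Real.rpow_mul hbase]
            rw [mul_one_div, div_self (by positivity : (l:ℝ) ≠ 0), Real.rpow_one]
        _ ≤ K ^ ((1:ℝ)/l) := Real.rpow_le_rpow (by positivity) hexp (by positivity)
    have : c ≤ (l:ℝ) / ((l:ℝ) + 2) := by
      rw [hcinv]
      rw [inv_le_comm₀ hd0 (by positivity)]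
      rw [inv_div]
      exact hroot
    calc c * ((l:ℝ) + 2) ≤ ((l:ℝ) / ((l:ℝ) + 2)) * ((l:ℝ) + 2) :=
          mul_le_mul_of_nonneg_right this (by positivity)
      _ = l := by field_simp
  -- Bound 2: l ≤ c * (K + l + 1)
  have hb2 : (l:ℝ) ≤ c * (K + l + 1) := by
    have hnn : (0:ℝ) ≤ (K - 1) / l := div_nonneg (by linarith) hl'.le
    have hroot : K ^ ((1:ℝ)/l) ≤ 1 + (K - 1) / l := by
      apply root_le_of_le_pow hlne hK0.le (by linarith)
      have := one_add_mul_le_pow (a := (K - 1) / l) (by linarith) l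
      have h1 : 1 + (l:ℝ) * ((K - 1) / l) = K := by field_simp; ring
      linarith [this, h1.symm.le]
    have h2 : (l:ℝ) * (K ^ ((1:ℝ)/l)) ≤ K + l + 1 := by
      have : (l:ℝ) * (1 + (K - 1) / l) = l + K - 1 := by field_simp; ring
      nlinarith
    rw [hcinv, inv_mul_eq_div, le_div_iff₀ hd0]
    linarith
  -- AM-GM: t^l * c ≤ (l * t^(l+1) + c^(l+1)) / (l+1)
  have hamgm : t ^ l * c ≤ ((l:ℝ) * t ^ (l+1) + c ^ (l+1)) / ((l:ℝ)+1) := by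
    have hw1 : (0:ℝ) ≤ (l:ℝ) / ((l:ℝ)+1) := by positivity
    have hw2 : (0:ℝ) ≤ 1 / ((l:ℝ)+1) := by positivity
    have hp1 : (0:ℝ) ≤ t ^ (l+1) := by positivity
    have hp2 : (0:ℝ) ≤ c ^ (l+1) := by positivity
    have hsum : (l:ℝ) / ((l:ℝ)+1) + 1 / ((l:ℝ)+1) = 1 := by field_simp
    have := Real.geom_mean_le_arith_mean2_weighted hw1 hw2 hp1 hp2 hsum
    have e1 : (t ^ (l+1)) ^ ((l:ℝ) / ((l:ℝ)+1)) = t ^ l := by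
      rw [← Real.rpow_natCast t (l+1), ← Real.rpow_mul ht0]
      rw [← Real.rpow_natCast t l]
      congr 1
      push_cast
      field_simp
    have e2 : (c ^ (l+1)) ^ ((1:ℝ) / ((l:ℝ)+1)) = c := by
      rw [← Real.rpow_natCast c (l+1), ← Real.rpow_mul hc0.le]
      push_cast
      rw [mul_one_div, div_self (by positivity : (l:ℝ)+1 ≠ 0), Real.rpow_one]
    rw [e1, e2] at this
    calc t ^ l * c ≤ (l:ℝ) / ((l:ℝ)+1) * t ^ (l+1) + 1 / ((l:ℝ)+1) * c ^ (l+1) := this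
      _ = ((l:ℝ) * t ^ (l+1) + c ^ (l+1)) / ((l:ℝ)+1) := by ring
  -- Core inequality
  have hcore : (1 + K * c) * t ^ l ≤ (1 - c) + (K + 1) * t ^ (l+1) := by
    have hA : (1 + K * c) * (l:ℝ) ≤ (K + 1) * ((l:ℝ) + 1) * c := by nlinarith [hb2]
    have hB : (1 + K * c) * c ^ l ≤ (1 - c) * ((l:ℝ) + 1) := by
      rw [hcl, inv_eq_one_div, mul_one_div, div_le_iff₀ hK0]
      nlinarith [mul_le_mul_of_nonneg_left hb1 hK0.le, hc0.le, hl']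
    have hchain : (1 + K * c) * (t ^ l * c) * ((l:ℝ)+1)
        ≤ (1 + K * c) * ((l:ℝ) * t ^ (l+1) + c ^ (l+1)) := by
      have h1 : (1 + K * c) * (t ^ l * c) ≤ (1 + K * c) * (((l:ℝ) * t ^ (l+1) + c ^ (l+1)) / ((l:ℝ)+1)) := by
        apply mul_le_mul_of_nonneg_left hamgm
        nlinarith
      calc (1 + K * c) * (t ^ l * c) * ((l:ℝ)+1)
          ≤ (1 + K * c) * (((l:ℝ) * t ^ (l+1) + c ^ (l+1)) / ((l:ℝ)+1)) * ((l:ℝ)+1) :=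
            mul_le_mul_of_nonneg_right h1 (by positivity)
        _ = (1 + K * c) * ((l:ℝ) * t ^ (l+1) + c ^ (l+1)) := by field_simp
    have hcl1 : c ^ (l+1) = c ^ l * c := by ring
    have htl1 : (0:ℝ) ≤ t ^ (l+1) := by positivity
    have htl : (0:ℝ) ≤ t ^ l := by positivity
    -- (1+Kc) t^l c (l+1) ≤ (1+Kc) l t^{l+1} + (1+Kc) c^{l+1}
    -- ≤ (K+1)(l+1)c t^{l+1} + (1-c)(l+1) c
    have h2 : (1 + K * c) * (l:ℝ) * t ^ (l+1) ≤ (K + 1) * ((l:ℝ)+1) * c * t ^ (l+1) := by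
      nlinarith [mul_le_mul_of_nonneg_right hA htl1]
    have h3 : (1 + K * c) * c ^ (l+1) ≤ (1 - c) * ((l:ℝ)+1) * c := by
      rw [hcl1, ← mul_assoc]
      nlinarith [mul_le_mul_of_nonneg_right hB hc0.le]
    have hsplit : (1 + K * c) * ((l:ℝ) * t ^ (l+1) + c ^ (l+1))
        = (1 + K * c) * (l:ℝ) * t ^ (l+1) + (1 + K * c) * c ^ (l+1) := by ring
    have h4 : (1 + K * c) * (t ^ l * c) * ((l:ℝ)+1)
        ≤ (K + 1) * ((l:ℝ)+1) * c * t ^ (l+1) + (1 - c) * ((l:ℝ)+1) * c := by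
      linarith [hchain, h2, h3, hsplit.le, hsplit.ge]
    have h5 : ((1 + K * c) * t ^ l) * (c * ((l:ℝ)+1))
        ≤ ((1 - c) + (K + 1) * t ^ (l+1)) * (c * ((l:ℝ)+1)) := by linarith [h4]
    exact le_of_mul_le_mul_right h5 (by positivity)
  -- Assemble
  have hkK : (k:ℝ) = K + 1 := by simp [hKdef]
  have hD0 : (0:ℝ) < 1 + K * t ^ l := by
    have : (0:ℝ) ≤ t ^ l := by positivity
    nlinarith
  rw [hkK]
  have hgoalL : 1 / (K + 1) + (K / (K + 1)) * c = (1 + K * c) / (K + 1) := by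
    field_simp
  rw [hgoalL, div_le_div_iff₀ (by linarith) hD0]
  nlinarith [mul_le_mul_of_nonneg_left hcore hK0.le]
end

section
/- Consider k advertisers and a single user with bids b_1 = b_high and b_2 = … = b_k = b_low where 0 < b_low ≤ b_high, and a uniform metric at distance d ∈ [0,1]. Any probability allocation (p_1,…,p_k) with p_i ≥ 0, Σ p_i ≤ 1, and |p_i − p_j| ≤ d for all i,j satisfies Σ_i p_i b_i ≤ (d + (1-d)/k)·b_high + (1-d)·((k-1)/k)·b_low. -/
/-- Uniform-metric upper bound on the value of any multiple-task-fair allocation on a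
single user where one advertiser bids `bhigh` and all others bid `blow`. -/
theorem stmt_6 (k : ℕ) (hk : 1 ≤ k) (d : ℝ) (hd0 : 0 ≤ d) (hd1 : d ≤ 1)
    (bhigh blow : ℝ) (hlow : 0 < blow) (hhl : blow ≤ bhigh)
    (p : Fin k → ℝ) (hp0 : ∀ i, 0 ≤ p i) (hps : ∑ i, p i ≤ 1)
    (hfair : ∀ i j, |p i - p j| ≤ d) :
    ∑ i, p i * (if i = (⟨0, hk⟩ : Fin k) then bhigh else blow) ≤
      (d + (1 - d) / k) * bhigh + (1 - d) * (((k : ℝ) - 1) / k) * blow := by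
  set i0 : Fin k := ⟨0, hk⟩
  have hkR : (0:ℝ) < k := by exact_mod_cast Nat.lt_of_lt_of_le Nat.zero_lt_one hk
  -- rewrite the sum
  have hsum : ∑ i, p i * (if i = i0 then bhigh else blow)
      = (∑ i, p i) * blow + p i0 * (bhigh - blow) := by
    have : ∀ i ∈ Finset.univ, p i * (if i = i0 then bhigh else blow)
        = p i * blow + (if i = i0 then p i * (bhigh - blow) else 0) := by
      intro i _; split <;> ring
    rw [Finset.sum_congr rfl this, Finset.sum_add_distrib,
      Finset.sum_ite_eq' Finset.univ i0 (fun i => p i * (bhigh - blow)),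
      if_pos (Finset.mem_univ i0), Finset.sum_mul]
  -- lower bound for each p i
  have h1 : ∀ i, p i0 - d ≤ p i := by
    intro i
    have := abs_le.mp (hfair i0 i)
    linarith [this.1, this.2]
  -- sum lower bound
  have h2 : p i0 + ((k:ℝ) - 1) * (p i0 - d) ≤ ∑ i, p i := by
    have herase : ((k:ℝ) - 1) * (p i0 - d) ≤ ∑ i ∈ Finset.univ.erase i0, p i := by
      have hc : (Finset.univ.erase i0).card = k - 1 := by
        simp [Finset.card_erase_of_mem]
      calc ((k:ℝ) - 1) * (p i0 - d)
          = ∑ _i ∈ Finset.univ.erase i0, (p i0 - d) := by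
            rw [Finset.sum_const, hc, nsmul_eq_mul]
            have : ((k - 1 : ℕ) : ℝ) = (k:ℝ) - 1 := by
              have : (1:ℕ) ≤ k := hk
              push_cast [Nat.cast_sub this]
              ring
            rw [this]
        _ ≤ ∑ i ∈ Finset.univ.erase i0, p i :=
            Finset.sum_le_sum fun i _ => h1 i
    have := Finset.add_sum_erase Finset.univ p (Finset.mem_univ i0)
    linarith
  -- bound on p i0
  have hpi0 : p i0 ≤ d + (1 - d) / k := by
    have h3 : p i0 + ((k:ℝ) - 1) * (p i0 - d) ≤ 1 := le_trans h2 hps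
    have h4 : p i0 * k ≤ d * k + (1 - d) := by nlinarith
    calc p i0 ≤ (d * k + (1 - d)) / k := (le_div_iff₀ hkR).mpr h4
      _ = d + (1 - d) / k := by field_simp
  have hS : (∑ i, p i) * blow ≤ blow := by nlinarith
  have hmul : p i0 * (bhigh - blow) ≤ (d + (1 - d) / k) * (bhigh - blow) :=
    mul_le_mul_of_nonneg_right hpi0 (by linarith)
  have hrhs : (d + (1 - d) / k) * bhigh + (1 - d) * (((k : ℝ) - 1) / k) * blow
      = blow + (d + (1 - d) / k) * (bhigh - blow) := by
    field_simp
    ring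
  rw [hsum, hrhs]
  linarith
end

section
/- Super-additivity of g implies that splitting a bid is not profitable under proportional allocation: if an advertiser with bid b splits into two sub-advertisers with bids x and y with x + y = b (keeping all other bids fixed), then the combined allocation probability of the two sub-advertisers, (g(x)+g(y))/(S − g(b) + g(x) + g(y)), is at most the original probability g(b)/S, where S = Σ_m g(b_m) is the original normalization sum. -/
/-- Super-additivity of `g` implies that splitting a bid into two sub-bids is not
profitable under proportional allocation. -/
theorem stmt_12 (g : ℝ → ℝ) (hmono : MonotoneOn g (Set.Ici 0)) (hcont : Continuous g)
    (hnonneg : ∀ z, 0 ≤ z → 0 ≤ g z)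
    (hsuper : ∀ x y : ℝ, 0 ≤ x → 0 ≤ y → g x + g y ≤ g (x + y))
    (b x y S : ℝ) (hx : 0 ≤ x) (hy : 0 ≤ y) (hxy : x + y = b)
    (hgb : 0 < g b) (hS : g b ≤ S) :
    (g x + g y) / (S - g b + g x + g y) ≤ g b / S := by
  have ht : g x + g y ≤ g b := hxy ▸ hsuper x y hx hy
  have htn : 0 ≤ g x + g y := add_nonneg (hnonneg x hx) (hnonneg y hy)
  have hSpos : 0 < S := lt_of_lt_of_le hgb hS
  rcases eq_or_lt_of_le htn with h0 | h0
  · rw [← h0, zero_div]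
    positivity
  · have hden : 0 < S - g b + g x + g y := by linarith
    rw [div_le_div_iff₀ hden hSpos]
    nlinarith
end

section
/- For all d ∈ [0,1) and real l ≥ l' ≥ 1: if a ratio ρ > 0 satisfies ρ ≤ ((1+d)/(1-d))^{1/l}, then ρ^l ≤ (1+d)/(1-d), and consequently for probabilities p = ρ^l·q/(ρ^l·q + s) and p' = q/(q+s) with q, s > 0, one has p − p' ≤ d. -/
/-- Two-advertiser version of total variation fairness of proportional allocation with
parameter `x^l` under the bid ratio condition `f_l(d) = ((1+d)/(1-d))^(1/l)`. -/
theorem stmt_13 (d : ℝ) (hd0 : 0 ≤ d) (hd1 : d < 1) (l l' : ℝ) (hl' : 1 ≤ l') (hl : l' ≤ l)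
    (ρ : ℝ) (hρ : 0 < ρ) (hratio : ρ ≤ ((1 + d) / (1 - d)) ^ ((1 : ℝ) / l)) :
    ρ ^ l ≤ (1 + d) / (1 - d) ∧
    ∀ q s : ℝ, 0 < q → 0 < s →
      ρ ^ l * q / (ρ ^ l * q + s) - q / (q + s) ≤ d := by
  have hlpos : (0 : ℝ) < l := by linarith
  have hd1'' : (0:ℝ) < 1 - d := by linarith
  have hx : (0 : ℝ) ≤ (1 + d) / (1 - d) := by positivity
  have hkey : ρ ^ l ≤ (1 + d) / (1 - d) := by
    have := Real.rpow_le_rpow hρ.le hratio hlpos.le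
    rwa [← Real.rpow_mul hx, one_div_mul_cancel hlpos.ne', Real.rpow_one] at this
  refine ⟨hkey, ?_⟩
  intro q s hq hs
  set r := ρ ^ l with hr
  have hrpos : 0 < r := Real.rpow_pos_of_pos hρ l
  have hA : 0 < r * q + s := by positivity
  have hB : 0 < q + s := by positivity
  have hd1' : 0 < 1 - d := by linarith
  have hkey' : r * (1 - d) ≤ 1 + d := (le_div_iff₀ hd1').mp hkey
  rw [div_sub_div _ _ hA.ne' hB.ne', div_le_iff₀ (by positivity)]
  nlinarith [mul_pos hq hs, mul_pos hA hB, sq_nonneg (q - s), sq_nonneg (q + s),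
    mul_nonneg (mul_nonneg hd0 hq.le) hs.le, mul_nonneg hd0 (sq_nonneg q),
    mul_nonneg hd0 (sq_nonneg s)]
end

section
/- Let g : R^{≥0} → R^{≥0} be increasing with g(1) > 0, and suppose the proportional allocation mechanism with parameter g achieves fair value at least r ∈ (0,1) on every single-user instance with k advertisers. Then for every B ≥ 1, applying the mechanism to bids (B, 1, 1, …, 1) yields g(B)·B/(g(B) + (k-1)g(1)) + (k-1)g(1)/(g(B)+(k-1)g(1)) ≥ r·B, which for B > 1/r implies g(B)/g(1) ≥ (k-1)·(rB − 1)/(B − rB). -/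
/-!
Test the fair-value guarantee on the bid vector `(B, 1, …, 1)`. Clearing the denominator
`g B + (k - 1) g 1` turns it into `(k - 1) g(1) (rB - 1) ≤ g(B) (B - rB)`, and `B - rB > 0`
as `r < 1`.
-/

open Finset Function

theorem sum_comp_update_const {ι R : Type*} [Fintype ι] [DecidableEq ι] [CommRing R]
    (f : R → R) (i₀ : ι) (a b : R) :
    ∑ i, f (update (fun _ => a) i₀ b i) = f b + ((Fintype.card ι : R) - 1) * f a := by
  have hcard : 1 ≤ Fintype.card ι := Fintype.card_pos_iff.mpr ⟨i₀⟩
  simp [apply_update (fun _ => f), sum_update_of_mem (mem_univ i₀), card_univ_sdiff,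
    Nat.cast_sub hcard]

theorem ratio_bound_of_value_bound {x y c r B : ℝ} (hy : 0 < y) (hS : 0 < x + c * y)
    (hr : r < 1) (hB : 0 < B)
    (hval : r * B ≤ x * B / (x + c * y) + c * y / (x + c * y)) :
    c * (r * B - 1) / (B - r * B) ≤ x / y := by
  have hBr : 0 < B - r * B := by nlinarith
  rw [← add_div, le_div_iff₀ hS] at hval
  rw [div_le_div_iff₀ hBr hy]
  nlinarith

theorem stmt_18_general (k : ℕ) (hk : 2 ≤ k) (g : ℝ → ℝ) (hmono : Monotone g) (hg1 : 0 < g 1)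
    (r : ℝ) (hr1 : r < 1)
    (hfv : ∀ b : Fin k → ℝ, (∀ i, 0 < b i) →
      ∀ Bmax : ℝ, (∀ i, b i ≤ Bmax) → (∃ i, b i = Bmax) →
        r * Bmax ≤ ∑ i, g (b i) / (∑ j, g (b j)) * b i) :
    ∀ B : ℝ, 1 ≤ B →
      (r * B ≤ g B * B / (g B + ((k : ℝ) - 1) * g 1)
        + ((k : ℝ) - 1) * g 1 / (g B + ((k : ℝ) - 1) * g 1)) ∧
      (1 / r < B → ((k : ℝ) - 1) * (r * B - 1) / (B - r * B) ≤ g B / g 1) := by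
  intro B hB
  have hgB : 0 < g B := hg1.trans_le (hmono hB)
  have hk1 : (0 : ℝ) ≤ k - 1 := sub_nonneg.mpr (by exact_mod_cast (by omega : 1 ≤ k))
  have hS : 0 < g B + ((k : ℝ) - 1) * g 1 := add_pos_of_pos_of_nonneg hgB (mul_nonneg hk1 hg1.le)
  set b : Fin k → ℝ := update (fun _ => 1) ⟨0, by omega⟩ B
  have hb_pos : ∀ i, 0 < b i :=
    (forall_update_iff _ fun _ x => 0 < x).mpr ⟨by linarith, fun _ _ => one_pos⟩
  have hb_le : ∀ i, b i ≤ B :=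
    (forall_update_iff _ fun _ x => x ≤ B).mpr ⟨le_rfl, fun _ _ => hB⟩
  have hval := hfv b hb_pos B hb_le ⟨_, update_self _ _ _⟩
  rw [sum_comp_update_const g, sum_comp_update_const (fun x => g x / _ * x), Fintype.card_fin]
    at hval
  have hfair : r * B ≤ g B * B / (g B + ((k : ℝ) - 1) * g 1)
      + ((k : ℝ) - 1) * g 1 / (g B + ((k : ℝ) - 1) * g 1) := by
    convert hval using 1
    ring
  exact ⟨hfair, fun _ => ratio_bound_of_value_bound hg1 hS hr1 (by linarith) hfair⟩

/-- If a proportional allocation mechanism with parameter `g` achieves fair value at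
least `r` on every single-user instance with `k` advertisers, then on the bid vector
`(B, 1, …, 1)` the guaranteed value inequality holds, and for `B > 1/r` this forces
`g(B)/g(1) ≥ (k-1)·(rB − 1)/(B − rB)`. -/
theorem stmt_18 (k : ℕ) (hk : 2 ≤ k) (g : ℝ → ℝ) (hmono : Monotone g) (hg1 : 0 < g 1)
    (r : ℝ) (hr0 : 0 < r) (hr1 : r < 1)
    (hfv : ∀ b : Fin k → ℝ, (∀ i, 0 < b i) →
      ∀ Bmax : ℝ, (∀ i, b i ≤ Bmax) → (∃ i, b i = Bmax) →
        r * Bmax ≤ ∑ i, g (b i) / (∑ j, g (b j)) * b i) :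
    ∀ B : ℝ, 1 ≤ B →
      (r * B ≤ g B * B / (g B + ((k : ℝ) - 1) * g 1)
        + ((k : ℝ) - 1) * g 1 / (g B + ((k : ℝ) - 1) * g 1)) ∧
      (1 / r < B → ((k : ℝ) - 1) * (r * B - 1) / (B - r * B) ≤ g B / g 1) :=
  stmt_18_general k hk g hmono hg1 r hr1 hfv
end
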